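/- Upward derivability for CL_AB: let γ be an elementary disjunction, PI a finite index set, and for each j ∈ PI let B_j be a coalition and ψ_j ∈ Φ_CL_AB, and let SD = γ ∨ ⋁_{j∈PI} ⟨B_j⟩ψ_j. If either (a) ⊢_CL_AB γ, or (b) there is j' ∈ PI such that ⊢_CL_AB ⋁_{j∈PI⁰} ψ_j ∨ ψ_{j'}, where PI⁰ = {j ∈ PI : B_j = AG}, then ⊢_CL_AB SD. -/
import Mathlib


open scoped Classical

/-- Graph-inclusion between joint actions (represented as partial functions). -/
def subJA {Agt Act : Type} (σ σ' : Agt → Option Act) : Prop :=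
  ∀ a x, σ a = some x → σ' a = some x

/-- Restriction of a joint action to a coalition. -/
noncomputable def restrictJA {Agt Act : Type} (σ : Agt → Option Act) (B : Set Agt) :
    Agt → Option Act :=
  fun a => if a ∈ B then σ a else none

/-- σ_A ⊎ σ_B : keep σ_A on A and σ_B on B − A. -/
noncomputable def uplusJA {Agt Act : Type} (A B : Set Agt) (σA σB : Agt → Option Act) :
    Agt → Option Act :=
  fun a => if a ∈ A then σA a else if a ∈ B then σB a else none

/-- Concurrent game models over agents `Agt` and atomic propositions `AP`.
A joint action of a coalition `A` is represented as a function `Agt → Option Act`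
whose domain (the set of agents where it is `some`) is exactly `A`. -/
structure CGM (Agt AP : Type) where
  St : Type
  Act : Type
  st_ne : Nonempty St
  act_ne : Nonempty Act
  aja : St → Set Agt → Set (Agt → Option Act)
  out : St → (Agt → Option Act) → Set St
  lab : St → Set AP
  aja_ne : ∀ s A, (aja s A).Nonempty
  aja_dom : ∀ s A, ∀ σ ∈ aja s A, ∀ a, (σ a).isSome ↔ a ∈ A
  aja_glue : ∀ s A (σ : Agt → Option Act), A.Nonempty →
      (∀ a, (σ a).isSome ↔ a ∈ A) →
      (σ ∈ aja s A ↔ ∀ a ∈ A, restrictJA σ {a} ∈ aja s {a})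
  out_univ : ∀ s, ∀ σ ∈ aja s Set.univ, ∃ t, out s σ = {t}
  out_univ_not : ∀ s (σ : Agt → Option Act), (∀ a, (σ a).isSome) →
      σ ∉ aja s Set.univ → out s σ = ∅
  out_glue : ∀ s A, A ≠ Set.univ → ∀ σ ∈ aja s A,
      out s σ = {t | ∃ σ' ∈ aja s Set.univ, subJA σ σ' ∧ t ∈ out s σ'}
  out_not : ∀ s A (σ : Agt → Option Act), (∀ a, (σ a).isSome ↔ a ∈ A) →
      A ≠ Set.univ → σ ∉ aja s A → out s σ = ∅

/-- The ability fragment Φ_CL_AB. -/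
inductive FormAB (Agt AP : Type) : Type
  | top : FormAB Agt AP
  | bot : FormAB Agt AP
  | atom : AP → FormAB Agt AP
  | natom : AP → FormAB Agt AP
  | and : FormAB Agt AP → FormAB Agt AP → FormAB Agt AP
  | or : FormAB Agt AP → FormAB Agt AP → FormAB Agt AP
  | dia : Set Agt → FormAB Agt AP → FormAB Agt AP

/-- Satisfaction for Φ_CL_AB. -/
def satAB {Agt AP : Type} (M : CGM Agt AP) : M.St → FormAB Agt AP → Prop
  | _, FormAB.top => True
  | _, FormAB.bot => False
  | s, FormAB.atom p => p ∈ M.lab s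
  | s, FormAB.natom p => p ∉ M.lab s
  | s, FormAB.and φ ψ => satAB M s φ ∧ satAB M s ψ
  | s, FormAB.or φ ψ => satAB M s φ ∨ satAB M s ψ
  | s, FormAB.dia A φ => ∃ σ ∈ M.aja s A, ∀ t ∈ M.out s σ, satAB M t φ

/-- Validity for Φ_CL_AB. -/
def validAB {Agt AP : Type} (φ : FormAB Agt AP) : Prop :=
  ∀ (M : CGM Agt AP) (s : M.St), satAB M s φ

/-- Propositional evaluation, treating diamond formulas as atoms (valuation `w`). -/
def evalAB {Agt AP : Type} (v : AP → Prop) (w : FormAB Agt AP → Prop) :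
    FormAB Agt AP → Prop
  | FormAB.top => True
  | FormAB.bot => False
  | FormAB.atom p => v p
  | FormAB.natom p => ¬ v p
  | FormAB.and φ ψ => evalAB v w φ ∧ evalAB v w ψ
  | FormAB.or φ ψ => evalAB v w φ ∨ evalAB v w ψ
  | FormAB.dia A φ => w (FormAB.dia A φ)

/-- Derivability in the axiomatic system for CL_AB. -/
inductive DerAB {Agt AP : Type} : FormAB Agt AP → Prop
  | r1 (Γ : List (FormAB Agt AP)) (ψ : FormAB Agt AP) :
      (∀ φ ∈ Γ, DerAB φ) →
      (∀ (v : AP → Prop) (w : FormAB Agt AP → Prop),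
        (∀ φ ∈ Γ, evalAB v w φ) → evalAB v w ψ) →
      DerAB ψ
  | r2 (A : Set Agt) (φ : FormAB Agt AP) : DerAB φ → DerAB (FormAB.dia A φ)
  | r3 (A : Set Agt) (φ1 φ2 χ : FormAB Agt AP) :
      DerAB (FormAB.or (FormAB.dia A (FormAB.or φ1 φ2)) χ) →
      DerAB (FormAB.or (FormAB.dia A φ1) (FormAB.or (FormAB.dia Set.univ φ2) χ))

/-- Literals of Φ_CL_AB. -/
inductive IsLitAB {Agt AP : Type} : FormAB Agt AP → Prop
  | atom (p : AP) : IsLitAB (FormAB.atom p)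
  | natom (p : AP) : IsLitAB (FormAB.natom p)

/-- Elementary disjunctions (⊥ is the empty disjunction). -/
inductive IsElemDisjAB {Agt AP : Type} : FormAB Agt AP → Prop
  | bot : IsElemDisjAB FormAB.bot
  | lit {φ : FormAB Agt AP} : IsLitAB φ → IsElemDisjAB φ
  | or {φ ψ : FormAB Agt AP} : IsElemDisjAB φ → IsElemDisjAB ψ →
      IsElemDisjAB (FormAB.or φ ψ)

/-- Finite disjunction of a list of formulas (empty disjunction is ⊥). -/
def bigOrAB {Agt AP : Type} : List (FormAB Agt AP) → FormAB Agt AP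
  | [] => FormAB.bot
  | φ :: l => FormAB.or φ (bigOrAB l)

section UpwardAux

variable {Agt AP : Type}

/-- Right-nested disjunction of a nonempty list (head plus tail). -/
def rchainAB : FormAB Agt AP → List (FormAB Agt AP) → FormAB Agt AP
  | x, [] => x
  | x, y :: l => FormAB.or x (rchainAB y l)

lemma der_mp {φ ψ : FormAB Agt AP} (h : DerAB φ)
    (himp : ∀ (v : AP → Prop) (w : FormAB Agt AP → Prop),
      evalAB v w φ → evalAB v w ψ) : DerAB ψ :=
  DerAB.r1 [φ] ψ (by simpa using h) (fun v w hΓ => himp v w (hΓ φ (by simp)))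

lemma eval_bigOr (v : AP → Prop) (w : FormAB Agt AP → Prop) :
    ∀ l : List (FormAB Agt AP), evalAB v w (bigOrAB l) ↔ ∃ φ ∈ l, evalAB v w φ
  | [] => by simp [bigOrAB, evalAB]
  | x :: l => by simp [bigOrAB, evalAB, eval_bigOr v w l]

lemma eval_rchain (v : AP → Prop) (w : FormAB Agt AP → Prop) :
    ∀ (l : List (FormAB Agt AP)) (x),
      evalAB v w (rchainAB x l) ↔ (evalAB v w x ∨ ∃ φ ∈ l, evalAB v w φ)
  | [], x => by simp [rchainAB]
  | y :: l, x => by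
      simp only [rchainAB, evalAB, eval_rchain v w l y, List.mem_cons]
      constructor
      · rintro (h | h | ⟨φ, hφ, h⟩)
        · exact Or.inl h
        · exact Or.inr ⟨y, Or.inl rfl, h⟩
        · exact Or.inr ⟨φ, Or.inr hφ, h⟩
      · rintro (h | ⟨φ, (rfl | hφ), h⟩)
        · exact Or.inl h
        · exact Or.inr (Or.inl h)
        · exact Or.inr (Or.inr ⟨φ, hφ, h⟩)

lemma peelAB : ∀ (l : List (FormAB Agt AP)) (x χ : FormAB Agt AP),
    DerAB (FormAB.or (FormAB.dia Set.univ (rchainAB x l)) χ) →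
    DerAB (FormAB.or (bigOrAB ((x :: l).map (FormAB.dia Set.univ))) χ)
  | [], x, χ, h => der_mp h (by
      intro v w hv
      simp only [evalAB, rchainAB, List.map_cons, List.map_nil, bigOrAB] at hv ⊢
      tauto)
  | y :: l, x, χ, h => by
      simp only [rchainAB] at h
      have h3 := DerAB.r3 Set.univ x (rchainAB y l) χ h
      have h4 : DerAB (FormAB.or (FormAB.dia Set.univ (rchainAB y l))
          (FormAB.or (FormAB.dia Set.univ x) χ)) :=
        der_mp h3 (by intro v w hv; simp only [evalAB] at hv ⊢; tauto)
      have h5 := peelAB l y (FormAB.or (FormAB.dia Set.univ x) χ) h4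
      refine der_mp h5 ?_
      intro v w hv
      simp only [List.map_cons, bigOrAB, evalAB] at hv ⊢
      tauto

end UpwardAux

/-- Upward derivability for CL_AB: if γ is derivable, or ⋁_{j∈PI⁰}ψ_j ∨ ψ_{j'} is
derivable for some j' ∈ PI (where PI⁰ = {j ∈ PI : B_j = AG}), then the standard
disjunction γ ∨ ⋁_{j∈PI}⟨B_j⟩ψ_j is derivable. -/
theorem upward_derivability_CL_AB
    {Agt AP : Type} [Fintype Agt] [Nonempty Agt] [Countable AP]
    {ι : Type} [DecidableEq ι]
    (γ : FormAB Agt AP) (hγ : IsElemDisjAB γ)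
    (PI : Finset ι) (B : ι → Set Agt) (ψ : ι → FormAB Agt AP)
    (h : DerAB γ ∨
      ∃ j' ∈ PI, DerAB (FormAB.or
        (bigOrAB ((PI.filter fun j => B j = Set.univ).toList.map fun j => ψ j))
        (ψ j'))) :
    DerAB (FormAB.or γ
      (bigOrAB (PI.toList.map fun j => FormAB.dia (B j) (ψ j)))) := by
  -- membership helper: j ∈ PI gives the diamond in the goal disjunction
  have hmem : ∀ j ∈ PI, (FormAB.dia (B j) (ψ j)) ∈
      (PI.toList.map fun j => FormAB.dia (B j) (ψ j)) := by
    intro j hj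
    exact List.mem_map.2 ⟨j, Finset.mem_toList.2 hj, rfl⟩
  have hLmem : ∀ j ∈ (PI.filter fun j => B j = Set.univ).toList,
      j ∈ PI ∧ B j = Set.univ := by
    intro j hj
    exact Finset.mem_filter.1 (Finset.mem_toList.1 hj)
  rcases h with hγ' | ⟨j', hj', hd⟩
  · exact der_mp hγ' (by intro v w hv; exact Or.inl hv)
  · rcases hLl : (PI.filter fun j => B j = Set.univ).toList with _ | ⟨x, l⟩
    · -- empty PI⁰ : hd gives ⊢ ψ j'
      rw [hLl] at hd
      have h1 : DerAB (ψ j') := der_mp hd (by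
        intro v w hv
        simp only [List.map_nil, bigOrAB, evalAB] at hv
        tauto)
      have h2 := DerAB.r2 (B j') (ψ j') h1
      refine der_mp h2 ?_
      intro v w hv
      refine Or.inr ?_
      exact (eval_bigOr v w _).2 ⟨_, hmem j' hj', hv⟩
    · rw [hLl] at hd
      -- rearrange to base-first chain
      have h1 : DerAB (FormAB.or (ψ j') (rchainAB (ψ x) (l.map ψ))) := by
        refine der_mp hd ?_
        intro v w hv
        simp only [List.map_cons, bigOrAB, evalAB, eval_bigOr, eval_rchain] at hv ⊢
        tauto
      have h2 := DerAB.r2 (B j') _ h1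
      have h3 : DerAB (FormAB.or
          (FormAB.dia (B j') (FormAB.or (ψ j') (rchainAB (ψ x) (l.map ψ))))
          FormAB.bot) := der_mp h2 (fun v w hv => Or.inl hv)
      have h4 := DerAB.r3 (B j') (ψ j') (rchainAB (ψ x) (l.map ψ)) FormAB.bot h3
      have h5 : DerAB (FormAB.or (FormAB.dia Set.univ (rchainAB (ψ x) (l.map ψ)))
          (FormAB.dia (B j') (ψ j'))) :=
        der_mp h4 (by intro v w hv; simp only [evalAB] at hv ⊢; tauto)
      have h6 := peelAB (l.map ψ) (ψ x) (FormAB.dia (B j') (ψ j')) h5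
      refine der_mp h6 ?_
      intro v w hv
      have hv' : evalAB v w (bigOrAB ((ψ x :: l.map ψ).map (FormAB.dia Set.univ)))
          ∨ evalAB v w (FormAB.dia (B j') (ψ j')) := hv
      have goal2 : evalAB v w (bigOrAB (PI.toList.map fun j => FormAB.dia (B j) (ψ j))) := by
        refine (eval_bigOr v w _).2 ?_
        rcases hv' with h1 | h1
        · rcases (eval_bigOr v w _).1 h1 with ⟨φ, hφ, hw⟩
          rcases List.mem_map.1 hφ with ⟨φ', hφ', rfl⟩
          rcases List.mem_map.1 (show φ' ∈ (x :: l).map ψ from hφ') with ⟨j, hj, rfl⟩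
          have hj2 := hLmem j (by rw [hLl]; exact hj)
          refine ⟨FormAB.dia (B j) (ψ j), hmem j hj2.1, ?_⟩
          rw [hj2.2]
          exact hw
        · exact ⟨_, hmem j' hj', h1⟩
      exact Or.inr goal2
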